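/- arXiv:2010.10747 — 2 statements merged into one kernel-verified Lean document; each statement's English description precedes it below -/
import Mathlib

section
/- (Proposition 1 of the paper) For fixed α > 0, weights w_i ≥ 0, labels y_i and candidate classifiers g taking values in the K-class encoding set, minimizing ∑_{i=1}^n w_i exp(-(1/K) α y_i^T g(x_i)) over g in a class F_0 is equivalent to minimizing the weighted misclassification error ∑_{i=1}^n w_i 𝟙{g(x_i) ≠ y_i}: a classifier g minimizes the first objective if and only if it minimizes the second. -/
open Finset Real

/-- The K-class label encoding. -/
noncomputable def enc (K : ℕ) (c : Fin K) : Fin K → ℝ :=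
  fun k => if k = c then 1 else -1 / ((K : ℝ) - 1)

lemma enc_inner (K : ℕ) (hK : 2 ≤ K) (c c' : Fin K) :
    (∑ k, enc K c k * enc K c' k) =
      if c' = c then (K:ℝ)/((K:ℝ)-1) else -(K:ℝ)/((K:ℝ)-1)^2 := by
  have h2 : (2:ℝ) ≤ (K:ℝ) := by exact_mod_cast hK
  have hK1 : (0:ℝ) < (K:ℝ) - 1 := by linarith
  have hne : ((K:ℝ) - 1) ≠ 0 := ne_of_gt hK1
  by_cases h : c' = c
  · subst h
    rw [if_pos rfl, ← Finset.add_sum_erase _ _ (Finset.mem_univ c')]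
    have h1 : enc K c' c' * enc K c' c' = 1 := by simp [enc]
    have h2' : ∑ k ∈ Finset.univ.erase c', enc K c' k * enc K c' k
        = ((K:ℝ)-1) * ((-1/((K:ℝ)-1)) * (-1/((K:ℝ)-1))) := by
      rw [Finset.sum_congr rfl (fun k hk => by
        rw [show enc K c' k = -1/((K:ℝ)-1) from by
          simp [enc, Finset.mem_erase.mp hk |>.1]]),
        Finset.sum_const, Finset.card_erase_of_mem (Finset.mem_univ _),
        Finset.card_univ, Fintype.card_fin, nsmul_eq_mul,
        Nat.cast_sub (by omega : 1 ≤ K), Nat.cast_one]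
    rw [h1, h2']
    field_simp
    ring
  · rw [if_neg h, ← Finset.add_sum_erase _ _ (Finset.mem_univ c'),
      ← Finset.add_sum_erase _ _ (Finset.mem_erase.mpr ⟨Ne.symm h, Finset.mem_univ c⟩)]
    have hA : enc K c c' * enc K c' c' = -1/((K:ℝ)-1) := by
      simp [enc, h, Ne.symm h]
    have hB : enc K c c * enc K c' c = -1/((K:ℝ)-1) := by
      simp [enc, h, Ne.symm h]
    have hC : ∑ k ∈ (Finset.univ.erase c').erase c, enc K c k * enc K c' k
        = ((K:ℝ)-2) * ((-1/((K:ℝ)-1)) * (-1/((K:ℝ)-1))) := by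
      rw [Finset.sum_congr rfl (fun k hk => by
        obtain ⟨hkc, hk'⟩ := Finset.mem_erase.mp hk
        obtain ⟨hkc', _⟩ := Finset.mem_erase.mp hk'
        rw [show enc K c k = -1/((K:ℝ)-1) from by simp [enc, hkc],
          show enc K c' k = -1/((K:ℝ)-1) from by simp [enc, hkc']]),
        Finset.sum_const, Finset.card_erase_of_mem
          (Finset.mem_erase.mpr ⟨Ne.symm h, Finset.mem_univ c⟩),
        Finset.card_erase_of_mem (Finset.mem_univ _),
        Finset.card_univ, Fintype.card_fin, nsmul_eq_mul]
      have : ((K - 1 - 1 : ℕ) : ℝ) = (K:ℝ) - 2 := by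
        rw [Nat.sub_sub, Nat.cast_sub hK]; norm_num
      rw [this]
    rw [hA, hB, hC]
    field_simp
    ring

/-- Proposition 1: minimizing the weighted exponential loss over a classifier
class is equivalent to minimizing the weighted misclassification error. -/
theorem stmt_3 {X : Type*} (K n : ℕ) (hK : 2 ≤ K) (α : ℝ) (hα : 0 < α)
    (w : Fin n → ℝ) (hw : ∀ i, 0 ≤ w i)
    (x : Fin n → X) (y : Fin n → Fin K)
    (F0 : Set (X → Fin K)) (hF0 : F0.Nonempty)
    (g : X → Fin K) (hg : g ∈ F0) :
    (∀ g' ∈ F0,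
        (∑ i, w i * Real.exp (-(1 / (K : ℝ)) * α *
            ∑ k, enc K (y i) k * enc K (g (x i)) k)) ≤
        (∑ i, w i * Real.exp (-(1 / (K : ℝ)) * α *
            ∑ k, enc K (y i) k * enc K (g' (x i)) k)))
    ↔
    (∀ g' ∈ F0,
        (∑ i, w i * (if g (x i) ≠ y i then (1 : ℝ) else 0)) ≤
        (∑ i, w i * (if g' (x i) ≠ y i then (1 : ℝ) else 0))) := by
  have h2 : (2:ℝ) ≤ (K:ℝ) := by exact_mod_cast hK
  have hK0 : (0:ℝ) < (K:ℝ) := by linarith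
  have hK1 : (0:ℝ) < (K:ℝ) - 1 := by linarith
  set A : ℝ := Real.exp (-α/((K:ℝ)-1)) with hA
  set B : ℝ := Real.exp (α/((K:ℝ)-1)^2) with hB
  have hAB : A < B := by
    apply Real.exp_lt_exp.mpr
    have h1 : -α/((K:ℝ)-1) < 0 := by
      apply div_neg_of_neg_of_pos (by linarith) hK1
    have h2' : 0 < α/((K:ℝ)-1)^2 := by positivity
    linarith
  -- key: exp term = A + (B - A) * indicator
  have key : ∀ (g' : X → Fin K) (i : Fin n),
      Real.exp (-(1 / (K : ℝ)) * α * ∑ k, enc K (y i) k * enc K (g' (x i)) k)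
      = A + (B - A) * (if g' (x i) ≠ y i then (1:ℝ) else 0) := by
    intro g' i
    rw [enc_inner K hK]
    by_cases h : g' (x i) = y i
    · rw [if_pos h, if_neg (by simp [h]), mul_zero, add_zero, hA]
      congr 1
      field_simp
    · rw [if_neg h, if_pos h, mul_one, hB, hA]
      have : -(1 / (K:ℝ)) * α * (-(K:ℝ)/((K:ℝ)-1)^2) = α/((K:ℝ)-1)^2 := by
        field_simp
      rw [this]
      ring
  have expand : ∀ (g' : X → Fin K),
      (∑ i, w i * Real.exp (-(1 / (K : ℝ)) * α *
          ∑ k, enc K (y i) k * enc K (g' (x i)) k))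
      = (∑ i, w i) * A + (B - A) * (∑ i, w i * (if g' (x i) ≠ y i then (1:ℝ) else 0)) := by
    intro g'
    rw [Finset.sum_mul, Finset.mul_sum, ← Finset.sum_add_distrib]
    apply Finset.sum_congr rfl
    intro i _
    rw [key g' i]
    ring
  constructor
  · intro H g' hg'
    have := H g' hg'
    rw [expand g, expand g'] at this
    have hd : 0 < B - A := by linarith
    nlinarith
  · intro H g' hg'
    have := H g' hg'
    rw [expand g, expand g']
    nlinarith
end

section
/- (Optimal model weight for agent A, equation (5)) Let w_i ≥ 0 with ∑ w_i > 0, and let r_i ∈ {0,1} indicate correct classification of sample i. Set r̄ = (∑ w_i r_i)/(∑ w_i) and assume 0 < r̄ < 1. Then the minimizer over α ∈ ℝ of ∑_i w_i exp(-α/(K-1) if r_i = 1 else α/(K-1)^2), up to the positive scaling factor K/(K-1)^2, equals log(r̄/(1-r̄)) + log(K-1). In particular, this quantity is positive if and only if r̄ > 1/K. -/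
open Finset Real

lemma min_exp_combo (A B a b αs : ℝ) (hA : 0 < A) (hB : 0 < B) (ha : 0 < a) (hb : 0 < b)
    (hfoc : a * A * Real.exp (-(a * αs)) = b * B * Real.exp (b * αs)) :
    ∀ α : ℝ, α ≠ αs →
      A * Real.exp (-(a * αs)) + B * Real.exp (b * αs) <
        A * Real.exp (-(a * α)) + B * Real.exp (b * α) := by
  intro α hne
  set δ := α - αs with hδdef
  have hδ : δ ≠ 0 := sub_ne_zero.mpr hne
  have h1 : -(a * δ) + 1 < Real.exp (-(a * δ)) :=
    Real.add_one_lt_exp (by simp [ha.ne', hδ])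
  have h2 : b * δ + 1 < Real.exp (b * δ) :=
    Real.add_one_lt_exp (by simp [hb.ne', hδ])
  have hE1 : 0 < A * Real.exp (-(a * αs)) := by positivity
  have hE2 : 0 < B * Real.exp (b * αs) := by positivity
  have e1 : A * Real.exp (-(a * α)) = A * Real.exp (-(a * αs)) * Real.exp (-(a * δ)) := by
    rw [mul_assoc, ← Real.exp_add]; congr 2; rw [hδdef]; ring
  have e2 : B * Real.exp (b * α) = B * Real.exp (b * αs) * Real.exp (b * δ) := by
    rw [mul_assoc, ← Real.exp_add]; congr 2; rw [hδdef]; ring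
  have k1 : A * Real.exp (-(a * αs)) * (-(a * δ) + 1) <
      A * Real.exp (-(a * αs)) * Real.exp (-(a * δ)) :=
    mul_lt_mul_of_pos_left h1 hE1
  have k2 : B * Real.exp (b * αs) * (b * δ + 1) <
      B * Real.exp (b * αs) * Real.exp (b * δ) :=
    mul_lt_mul_of_pos_left h2 hE2
  have hfoc' : δ * (a * A * Real.exp (-(a * αs))) = δ * (b * B * Real.exp (b * αs)) := by
    rw [hfoc]
  rw [e1, e2]
  nlinarith [k1, k2, hfoc']

theorem stmt_6 (K n : ℕ) (hK : 2 ≤ K) (w : Fin n → ℝ) (hw : ∀ i, 0 ≤ w i)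
    (hwsum : 0 < ∑ i, w i) (r : Fin n → ℝ) (hr : ∀ i, r i = 0 ∨ r i = 1)
    (rbar : ℝ) (hrbar : rbar = (∑ i, w i * r i) / ∑ i, w i)
    (h0 : 0 < rbar) (h1 : rbar < 1) :
    let L : ℝ → ℝ := fun α => ∑ i, w i *
      Real.exp (-(α / ((K : ℝ) - 1)) * r i + (α / ((K : ℝ) - 1) ^ 2) * (1 - r i))
    let αstar : ℝ := (((K : ℝ) - 1) ^ 2 / (K : ℝ)) *
      (Real.log (rbar / (1 - rbar)) + Real.log ((K : ℝ) - 1))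
    (∀ α : ℝ, α ≠ αstar → L αstar < L α) ∧
      (0 < αstar ↔ 1 / (K : ℝ) < rbar) := by
  intro L αstar
  have hK2 : (2 : ℝ) ≤ (K : ℝ) := by exact_mod_cast hK
  have hKm : (0 : ℝ) < (K : ℝ) - 1 := by linarith
  have hK0 : (0 : ℝ) < (K : ℝ) := by linarith
  set Kr : ℝ := (K : ℝ) with hKr
  set a : ℝ := 1 / (Kr - 1) with hadef
  set b : ℝ := 1 / (Kr - 1) ^ 2 with hbdef
  have ha : 0 < a := by positivity
  have hb : 0 < b := by positivity
  set S : ℝ := ∑ i, w i with hS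
  set A : ℝ := ∑ i, w i * r i with hAdef
  have hAS : A = rbar * S := by
    rw [hrbar]; field_simp
  have hA : 0 < A := by rw [hAS]; exact mul_pos h0 hwsum
  set Bv : ℝ := S - A with hBdef
  have hBS : Bv = (1 - rbar) * S := by rw [hBdef, hAS]; ring
  have hB : 0 < Bv := by rw [hBS]; exact mul_pos (by linarith) hwsum
  have hL : ∀ α : ℝ, L α = A * Real.exp (-(a * α)) + Bv * Real.exp (b * α) := by
    intro α
    have step : ∀ i, w i * Real.exp (-(α / (Kr - 1)) * r i + (α / (Kr - 1) ^ 2) * (1 - r i))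
        = (w i * r i) * Real.exp (-(a * α)) + (w i * (1 - r i)) * Real.exp (b * α) := by
      intro i
      rcases hr i with h | h
      · rw [h]
        have e0 : -(α / (Kr - 1)) * 0 + (α / (Kr - 1) ^ 2) * (1 - 0) = b * α := by
          rw [hbdef]; ring
        rw [e0]; ring
      · rw [h]
        have e1 : -(α / (Kr - 1)) * 1 + (α / (Kr - 1) ^ 2) * (1 - 1) = -(a * α) := by
          rw [hadef]; ring
        rw [e1]; ring
    calc L α = ∑ i, ((w i * r i) * Real.exp (-(a * α)) + (w i * (1 - r i)) * Real.exp (b * α)) := by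
          exact Finset.sum_congr rfl (fun i _ => step i)
      _ = (∑ i, w i * r i) * Real.exp (-(a * α)) + (∑ i, w i * (1 - r i)) * Real.exp (b * α) := by
          rw [Finset.sum_add_distrib, ← Finset.sum_mul, ← Finset.sum_mul]
      _ = A * Real.exp (-(a * α)) + Bv * Real.exp (b * α) := by
          congr 1
          congr 1
          rw [hBdef, hAdef, hS, ← Finset.sum_sub_distrib]
          exact Finset.sum_congr rfl (fun i _ => by ring)
  have hexp : Real.exp ((a + b) * αstar) = (rbar / (1 - rbar)) * (Kr - 1) := by
    have h3 : (a + b) * αstar = Real.log (rbar / (1 - rbar)) + Real.log (Kr - 1) := by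
      show (a + b) * ((Kr - 1) ^ 2 / Kr * (Real.log (rbar / (1 - rbar)) + Real.log (Kr - 1))) = _
      rw [hadef, hbdef]
      field_simp
      ring
    rw [h3, Real.exp_add, Real.exp_log (div_pos h0 (by linarith)), Real.exp_log hKm]
  have hfoc : a * A * Real.exp (-(a * αstar)) = b * Bv * Real.exp (b * αstar) := by
    have key : a * A = b * Bv * ((rbar / (1 - rbar)) * (Kr - 1)) := by
      rw [hadef, hbdef, hAS, hBS]
      have h1r : (1 : ℝ) - rbar ≠ 0 := by linarith
      field_simp
    have : a * A = b * Bv * Real.exp ((a + b) * αstar) := by rw [hexp]; exact key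
    calc a * A * Real.exp (-(a * αstar))
        = b * Bv * Real.exp ((a + b) * αstar) * Real.exp (-(a * αstar)) := by rw [← this]
      _ = b * Bv * Real.exp (b * αstar) := by
          rw [mul_assoc, ← Real.exp_add]
          congr 2
          ring
  constructor
  · intro α hne
    rw [hL, hL]
    exact min_exp_combo A Bv a b αstar hA hB ha hb hfoc α hne
  · have hlog : Real.log (rbar / (1 - rbar)) + Real.log (Kr - 1)
        = Real.log ((rbar / (1 - rbar)) * (Kr - 1)) := by
      rw [Real.log_mul (ne_of_gt (div_pos h0 (by linarith))) (ne_of_gt hKm)]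
    have hC : 0 < (Kr - 1) ^ 2 / Kr := by positivity
    constructor
    · intro hpos
      have : 0 < Real.log (rbar / (1 - rbar)) + Real.log (Kr - 1) := by
        by_contra hc
        push_neg at hc
        have : αstar ≤ 0 := mul_nonpos_of_nonneg_of_nonpos (le_of_lt hC) hc
        linarith
      rw [hlog] at this
      have hgt1 : 1 < (rbar / (1 - rbar)) * (Kr - 1) := by
        by_contra hc
        push_neg at hc
        have := Real.log_nonpos (le_of_lt (mul_pos (div_pos h0 (by linarith)) hKm)) hc
        linarith
      have h1r : (0 : ℝ) < 1 - rbar := by linarith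
      rw [div_mul_eq_mul_div, lt_div_iff₀ h1r] at hgt1
      rw [div_lt_iff₀ hK0]
      nlinarith
    · intro hlt
      rw [div_lt_iff₀ hK0] at hlt
      have h1r : (0 : ℝ) < 1 - rbar := by linarith
      have hgt1 : 1 < (rbar / (1 - rbar)) * (Kr - 1) := by
        rw [div_mul_eq_mul_div, lt_div_iff₀ h1r]
        nlinarith
      have := Real.log_pos hgt1
      rw [← hlog] at this
      exact mul_pos hC this
end
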